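/- Let n ≥ 2 and let u be a subword of λ̂_n with skip indices i_1 < ⋯ < i_s and skip reflections r^u = [r_1, …, r_s]. Then for each j ∈ {1, …, s}, (r_1 ⋯ r_{j−1}) r_j (r_{j−1} ⋯ r_1) = (( 0, i_j + ⌊(i_j − 1)/(n−1)⌋ )). -/

import Mathlib

/-- The affine reflection `((i,j))` of the affine symmetric group `W̃ₙ`, as a function
`ℤ → ℤ`: it interchanges `i + k*n` and `j + k*n` for every `k ∈ ℤ` and fixes all
integers not congruent to `i` or `j` mod `n`. -/
def affRefl (n : ℕ) (i j : ℤ) : ℤ → ℤ := fun k =>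
  if (k - i) % (n : ℤ) = 0 then k - i + j
  else if (k - j) % (n : ℤ) = 0 then k - j + i
  else k

/-- `t : ℤ → ℤ` is an affine reflection of `W̃ₙ`. -/
def IsAffRefl (n : ℕ) (t : ℤ → ℤ) : Prop :=
  ∃ i j : ℤ, (i - j) % (n : ℤ) ≠ 0 ∧ t = affRefl n i j

/-- The simple reflection `sⱼ = ((j, j+1))`. -/
def simpleRefl (n : ℕ) (j : ℤ) : ℤ → ℤ := affRefl n j (j + 1)

/-- The translation `λₙ`: it sends `k ≡ 0 (mod n)` to `k - n(n-1)` and all other `k`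
to `k + n`. -/
def lam (n : ℕ) : ℤ → ℤ := fun k =>
  if k % (n : ℤ) = 0 then k - (n : ℤ) * ((n : ℤ) - 1) else k + (n : ℤ)

/-- The product `r₁ r₂ ⋯ rₘ` of a list of elements, with `(w·v)(k) = w(v(k))`. -/
def listProd (l : List (ℤ → ℤ)) : ℤ → ℤ := l.foldr (· ∘ ·) id

/-- `l` is a factorization of `λₙ` into affine reflections. -/
def IsFactorization (n : ℕ) (l : List (ℤ → ℤ)) : Prop :=
  (∀ t ∈ l, IsAffRefl n t) ∧ listProd l = lam n

/-- A tree-like factorization of `λₙ`: a factorization `[r₁, …, r_{2n-2}]` into `2n-2`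
affine reflections such that there are integers `a₀, …, a_{2n-2}` and `b₁, …, b_{2n-2}`
with `r_k = ((a_{k-1}, b_k))`, `a_{k-1} < b_k` and `a_k ≡ b_k (mod n)`
(0-based: `r` at index `k` equals `((a k, b (k+1)))`). -/
def IsTreeLike (n : ℕ) (l : List (ℤ → ℤ)) : Prop :=
  IsFactorization n l ∧ l.length = 2 * n - 2 ∧
  ∃ a b : ℕ → ℤ, ∀ k : ℕ, ∀ h : k < l.length,
    l.get ⟨k, h⟩ = affRefl n (a k) (b (k + 1)) ∧
    a k < b (k + 1) ∧ (a (k + 1) - b (k + 1)) % (n : ℤ) = 0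

/-- `a₀ < a₁ < ⋯` is a strictly increasing endpoint sequence of the factorization `l`:
`r_ℓ = ((a_{ℓ-1}, a_ℓ))` (0-based: `r` at index `k` is `((a k, a (k+1)))`). -/
def EndSeq (n : ℕ) (l : List (ℤ → ℤ)) (a : ℕ → ℤ) : Prop :=
  ∀ k : ℕ, ∀ h : k < l.length,
    a k < a (k + 1) ∧ l.get ⟨k, h⟩ = affRefl n (a k) (a (k + 1))

/-- The representative of `x` modulo `n` lying in `{1, …, n}`. -/
def resOne (n : ℕ) (x : ℤ) : ℤ := if x % (n : ℤ) = 0 then (n : ℤ) else x % (n : ℤ)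

/-- `nb_k(r)` for the endpoint sequence `a` of a tree-like factorization of `λₙ`:
the list of the residues `a_i mod n` (representatives in `{1, …, n}`), in increasing
order of the index `i ∈ {1, …, 2n-2}`, over those `i` with `a_{i-1} ≡ k (mod n)`
(0-based: indices `i < 2n-2` with `a i ≡ k`, recording the residue of `a (i+1)`). -/
def nb (n : ℕ) (a : ℕ → ℤ) (k : ℤ) : List ℤ :=
  ((List.range (2 * n - 2)).filter (fun i => decide ((a i - k) % (n : ℤ) = 0))).map
    (fun i => resOne n (a (i + 1)))

/-- A cyclic factorization of `λₙ`: a tree-like factorization such that, for an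
endpoint sequence `a` as above, (i) `nb_n` is strictly increasing; and (ii) for each
`k ∈ {1, …, n-1}`, writing `nb_k = [c₁, …, c_ℓ]`, there is `j ∈ {1, …, ℓ}` with
`c_j < c_{j+1} < ⋯ < c_{ℓ-1} < k < c₁ < ⋯ < c_{j-1}`. -/
def IsCyclicFact (n : ℕ) (l : List (ℤ → ℤ)) : Prop :=
  IsTreeLike n l ∧
  ∃ a : ℕ → ℤ, EndSeq n l a ∧
    List.Chain' (· < ·) (nb n a (n : ℤ)) ∧
    (∀ k : ℤ, 1 ≤ k → k ≤ (n : ℤ) - 1 →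
      ∃ m : ℕ, m < (nb n a k).length ∧
        List.Chain' (· < ·)
          ((nb n a k).dropLast.drop m ++ k :: (nb n a k).dropLast.take m))

/-- The letter at (0-based) position `j` of the subword of `λ̂ₙ` with skip set `S`:
the identity `e` if `j` is a skip, and the simple reflection `sⱼ` otherwise. -/
def letterAt (n : ℕ) (S : Finset ℕ) (j : ℕ) : ℤ → ℤ :=
  if j ∈ S then id else simpleRefl n (j : ℤ)

/-- The subword of the word `λ̂ₙ = [s₀, s₁, …, s_{n-1}]^{n-1}` (of length `N = n(n-1)`,
whose letter at 0-based position `j` is `s_j`) with skip set `S`. -/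
def subword (n : ℕ) (S : Finset ℕ) : List (ℤ → ℤ) :=
  (List.range (n * (n - 1))).map (letterAt n S)

/-- `u_{(j)}`: the product of the first `j` letters of the subword. -/
def uPref (n : ℕ) (S : Finset ℕ) (j : ℕ) : ℤ → ℤ :=
  listProd ((subword n S).take j)

/-- `u_{(j)}⁻¹`: since every letter is an involution, the inverse of `u_{(j)}` is the
product of the first `j` letters in reverse order. -/
def uPrefInv (n : ℕ) (S : Finset ℕ) (j : ℕ) : ℤ → ℤ :=
  listProd (((subword n S).take j).reverse)

/-- The element `t_{j+1} = u_{(j)} s_j u_{(j)}⁻¹` of `inv(u)` (0-based `j`). -/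
def conjAt (n : ℕ) (S : Finset ℕ) (j : ℕ) : ℤ → ℤ :=
  uPref n S j ∘ simpleRefl n (j : ℤ) ∘ uPrefInv n S j

/-- The (0-based) skip indices of the subword, in increasing order. -/
def skipIdx (S : Finset ℕ) : List ℕ := S.sort (· ≤ ·)

/-- The sequence `r^u` of skip reflections of the subword with skip set `S`. -/
def skipRefls (n : ℕ) (S : Finset ℕ) : List (ℤ → ℤ) :=
  (skipIdx S).map (conjAt n S)

/-- The subword with skip set `S` is a member of `S_n`: it is a subword of `λ̂ₙ`
with exactly `2n-2` skips whose product is the identity. -/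
def SnMem (n : ℕ) (S : Finset ℕ) : Prop :=
  S ⊆ Finset.range (n * (n - 1)) ∧ S.card = 2 * n - 2 ∧ listProd (subword n S) = id

/-- The product of the suffix `r_{i+1} ⋯ r_m` (0-based: drops the first `i` factors). -/
def suffixProd (l : List (ℤ → ℤ)) (i : ℕ) : ℤ → ℤ := listProd (l.drop i)

/-- The cyclic segment product `u_{a+1} u_{a+2} ⋯ u_{a+L}` of the subword with skip set
`S` (0-based starting position `a`, indices taken modulo `N = n(n-1)`). -/
def segProd (n : ℕ) (S : Finset ℕ) (a L : ℕ) : ℤ → ℤ :=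
  listProd ((List.range L).map (fun t => letterAt n S ((a + t) % (n * (n - 1)))))

/-! Work in the permutation group of `ℤ`, with `w_m = s₀ ⋯ s_{m-1}` the prefixes of the full
word and `q_m = w_m s_m w_m⁻¹` its reflections. Since the letters are involutions,
`w_m = q_m w_{m+1}`, so by induction `u_(m) = T_m w_m`, where `T_m` is the product of the `q_k`
over the skips `k < m` in increasing order. Hence `t_m = T_m q_m T_m⁻¹`, the
products `r₁ ⋯ r_{j-1}` telescope to `T_{i_j}⁻¹`, and the conjugate in question is `q_{i_j}`,
independently of the skip set. Finally `w_m` commutes with translation by `n`, so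
`q_m = ((w_m(m), w_m(m+1)))`, and evaluating `w_m` on the window `m, …, m + n - 1` gives
`w_m(m) = 0` and `w_m(m+1) = m + 1 + ⌊m/(n-1)⌋`. -/

section SubwordReflections

variable {G : Type*} [Group G] (s : ℕ → G) (S : Finset ℕ)

lemma List.prod_reverse_eq_inv_of_mul_self {l : List G} (h : ∀ x ∈ l, x * x = 1) :
    l.reverse.prod = l.prod⁻¹ := by
  rw [List.prod_inv_reverse,
    List.map_congr_left (g := id) fun x hx => inv_eq_of_mul_eq_one_left (h x hx), List.map_id]

def wordPrefix (m : ℕ) : G := ((List.range m).map s).prod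

def wordRefl (m : ℕ) : G := wordPrefix s m * s m * (wordPrefix s m)⁻¹

def subwordPrefix (m : ℕ) : G := ((List.range m).map fun k => if k ∈ S then 1 else s k).prod

def subwordRefl (m : ℕ) : G := subwordPrefix s S m * s m * (subwordPrefix s S m)⁻¹

def skipProd (f : ℕ → G) (m : ℕ) : G := (((List.range m).filter (· ∈ S)).map f).prod

variable {s S}

lemma wordPrefix_succ (m : ℕ) : wordPrefix s (m + 1) = wordPrefix s m * s m := by
  simp [wordPrefix, List.range_succ]

lemma subwordPrefix_succ (m : ℕ) :
    subwordPrefix s S (m + 1) = subwordPrefix s S m * if m ∈ S then 1 else s m := by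
  simp [subwordPrefix, List.range_succ]

lemma skipProd_succ (f : ℕ → G) (m : ℕ) :
    skipProd S f (m + 1) = skipProd S f m * if m ∈ S then f m else 1 := by
  unfold skipProd
  split_ifs with h <;> simp [List.range_succ, List.filter_append, h]

lemma wordRefl_mul_self (hs : ∀ k, s k * s k = 1) (m : ℕ) :
    wordRefl s m * wordRefl s m = 1 := by
  simp [wordRefl, mul_assoc, ← mul_assoc (s m) (s m), hs]

lemma wordRefl_mul_wordPrefix_succ (hs : ∀ k, s k * s k = 1) (m : ℕ) :
    wordRefl s m * wordPrefix s (m + 1) = wordPrefix s m := by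
  simp [wordRefl, wordPrefix_succ, mul_assoc, hs]

lemma subwordPrefix_eq_skipProd_mul (hs : ∀ k, s k * s k = 1) (m : ℕ) :
    subwordPrefix s S m = skipProd S (wordRefl s) m * wordPrefix s m := by
  induction m with
  | zero => simp [subwordPrefix, skipProd, wordPrefix]
  | succ m ih =>
    rw [subwordPrefix_succ, skipProd_succ, ih]
    split_ifs
    · rw [mul_one, mul_assoc, wordRefl_mul_wordPrefix_succ hs]
    · rw [mul_one, wordPrefix_succ, mul_assoc]

lemma subwordRefl_eq_conj (hs : ∀ k, s k * s k = 1) (m : ℕ) :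
    subwordRefl s S m =
      skipProd S (wordRefl s) m * wordRefl s m * (skipProd S (wordRefl s) m)⁻¹ := by
  simp [subwordRefl, wordRefl, subwordPrefix_eq_skipProd_mul hs, mul_assoc]

lemma subwordRefl_mul_self (hs : ∀ k, s k * s k = 1) (m : ℕ) :
    subwordRefl s S m * subwordRefl s S m = 1 := by
  simp [subwordRefl, mul_assoc, ← mul_assoc (s m) (s m), hs]

lemma skipProd_subwordRefl (hs : ∀ k, s k * s k = 1) (m : ℕ) :
    skipProd S (subwordRefl s S) m = (skipProd S (wordRefl s) m)⁻¹ := by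
  induction m with
  | zero => simp [skipProd]
  | succ m ih =>
    rw [skipProd_succ, skipProd_succ, ih]
    split_ifs
    · rw [subwordRefl_eq_conj hs, mul_inv_rev, inv_eq_of_mul_eq_one_left (wordRefl_mul_self hs m)]
      group
    · simp

lemma Finset.take_sort_eq_filter_range (S : Finset ℕ) {j : ℕ}
    (hj : j < (S.sort (· ≤ ·)).length) :
    (S.sort (· ≤ ·)).take j = (List.range (S.sort (· ≤ ·))[j]).filter (· ∈ S) := by
  have hL := S.sortedLT_sort
  refine (hL.pairwise.sublist (List.take_sublist _ _)).eq_of_mem_iff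
    (List.pairwise_lt_range.sublist List.filter_sublist) fun x => ?_
  simp only [List.mem_take_iff_getElem, List.mem_filter, List.mem_range, decide_eq_true_eq]
  constructor
  · rintro ⟨k, hk, rfl⟩
    exact ⟨hL.getElem_lt_getElem_iff.mpr (by omega),
      (Finset.mem_sort _).mp (List.getElem_mem _)⟩
  · rintro ⟨hx, hxS⟩
    obtain ⟨k, hk, rfl⟩ := List.mem_iff_getElem.mp ((Finset.mem_sort (· ≤ ·)).mpr hxS)
    exact ⟨k, lt_min (hL.getElem_lt_getElem_iff.mp hx) hk, rfl⟩

theorem conj_subwordRefl_eq_wordRefl (hs : ∀ k, s k * s k = 1) {j : ℕ}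
    (hj : j < (S.sort (· ≤ ·)).length) :
    let r := (S.sort (· ≤ ·)).map (subwordRefl s S)
    (r.take j).prod * subwordRefl s S (S.sort (· ≤ ·))[j] * (r.take j).reverse.prod =
      wordRefl s (S.sort (· ≤ ·))[j] := by
  intro r
  have hprod : (r.take j).prod = (skipProd S (wordRefl s) (S.sort (· ≤ ·))[j])⁻¹ := by
    rw [← skipProd_subwordRefl hs, skipProd, ← S.take_sort_eq_filter_range hj, List.map_take]
  rw [List.prod_reverse_eq_inv_of_mul_self, hprod, subwordRefl_eq_conj hs]
  · group
  · intro x hx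
    obtain ⟨k, -, rfl⟩ := List.mem_map.mp (List.mem_of_mem_take hx)
    exact subwordRefl_mul_self hs k

end SubwordReflections

section AffineReflections

variable {n : ℕ}

lemma affRefl_add_mul_left (a b c : ℤ) : affRefl n a b (a + n * c) = b + n * c := by
  simp only [affRefl, add_sub_cancel_left, Int.mul_emod_right, ↓reduceIte]
  ring

lemma affRefl_add_mul_right {a b : ℤ} (hab : ¬ (n : ℤ) ∣ b - a) (c : ℤ) :
    affRefl n a b (b + n * c) = a + n * c := by
  have : ¬ (n : ℤ) ∣ b + n * c - a := by
    rwa [add_sub_right_comm, dvd_add_left (dvd_mul_right _ _)]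
  simp only [affRefl, ← Int.dvd_iff_emod_eq_zero, this, add_sub_cancel_left, dvd_mul_right,
    ↓reduceIte]
  ring

lemma affRefl_apply_right {a b : ℤ} (hab : ¬ (n : ℤ) ∣ b - a) : affRefl n a b b = a := by
  simpa using affRefl_add_mul_right hab 0

lemma affRefl_of_not_dvd {a b k : ℤ} (ha : ¬ (n : ℤ) ∣ k - a) (hb : ¬ (n : ℤ) ∣ k - b) :
    affRefl n a b k = k := by
  simp [affRefl, ha, hb]

lemma affRefl_add_natCast (a b k : ℤ) : affRefl n a b (k + n) = affRefl n a b k + n := by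
  simp only [affRefl, add_sub_right_comm _ (n : ℤ), Int.add_emod_right]
  split_ifs <;> ring

lemma affRefl_involutive {a b : ℤ} (hab : ¬ (n : ℤ) ∣ b - a) :
    Function.Involutive (affRefl n a b) := by
  intro k
  by_cases ha : (n : ℤ) ∣ k - a
  · obtain ⟨c, hc⟩ := ha
    rw [eq_add_of_sub_eq' hc, affRefl_add_mul_left, affRefl_add_mul_right hab]
  by_cases hb : (n : ℤ) ∣ k - b
  · obtain ⟨c, hc⟩ := hb
    rw [eq_add_of_sub_eq' hc, affRefl_add_mul_right hab, affRefl_add_mul_left]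
  rw [affRefl_of_not_dvd ha hb, affRefl_of_not_dvd ha hb]

lemma not_natCast_dvd_of_pos_of_lt {d : ℤ} (hd : 0 < d) (hdn : d < n) : ¬ (n : ℤ) ∣ d :=
  fun h => absurd (Int.le_of_dvd hd h) (not_le.mpr hdn)

lemma apply_add_mul_of_periodic {w : ℤ → ℤ} (hw : ∀ k, w (k + n) = w k + n) (k c : ℤ) :
    w (k + n * c) = w k + n * c := by
  induction c using Int.induction_on generalizing k with
  | zero => simp
  | succ c ih => rw [mul_add_one, ← add_assoc, hw, ih, add_assoc]
  | pred c ih =>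
    have := hw (k + n * (-c - 1))
    rw [add_assoc, ← mul_add_one, sub_add_cancel, ih] at this
    linarith

lemma dvd_sub_apply_iff_of_periodic {w : Equiv.Perm ℤ} (hw : ∀ k, w (k + n) = w k + n)
    (x y : ℤ) : (n : ℤ) ∣ w x - w y ↔ (n : ℤ) ∣ x - y := by
  constructor
  · rintro ⟨c, hc⟩
    have : w x = w (y + n * c) := by rw [apply_add_mul_of_periodic hw, ← hc, add_sub_cancel]
    simp [w.injective this]
  · rintro ⟨c, hc⟩
    simp [eq_add_of_sub_eq' hc, apply_add_mul_of_periodic hw]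

lemma comp_affRefl_of_periodic {w : Equiv.Perm ℤ} (hw : ∀ k, w (k + n) = w k + n) {a b : ℤ}
    (hab : ¬ (n : ℤ) ∣ b - a) : w ∘ affRefl n a b = affRefl n (w a) (w b) ∘ w := by
  have hwab : ¬ (n : ℤ) ∣ w b - w a := (dvd_sub_apply_iff_of_periodic hw b a).not.mpr hab
  funext x
  simp only [Function.comp_apply]
  by_cases ha : (n : ℤ) ∣ x - a
  · obtain ⟨c, hc⟩ := ha
    rw [eq_add_of_sub_eq' hc, affRefl_add_mul_left, apply_add_mul_of_periodic hw,
      apply_add_mul_of_periodic hw, affRefl_add_mul_left]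
  by_cases hb : (n : ℤ) ∣ x - b
  · obtain ⟨c, hc⟩ := hb
    rw [eq_add_of_sub_eq' hc, affRefl_add_mul_right hab, apply_add_mul_of_periodic hw,
      apply_add_mul_of_periodic hw, affRefl_add_mul_right hwab]
  rw [affRefl_of_not_dvd ha hb, affRefl_of_not_dvd
    ((dvd_sub_apply_iff_of_periodic hw x a).not.mpr ha)
    ((dvd_sub_apply_iff_of_periodic hw x b).not.mpr hb)]

lemma simpleRefl_involutive (hn : 2 ≤ n) (j : ℤ) : Function.Involutive (simpleRefl n j) :=
  affRefl_involutive (by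
    rw [add_sub_cancel_left]
    exact not_natCast_dvd_of_pos_of_lt one_pos (by exact_mod_cast hn))

variable (hn : 2 ≤ n)

def simpleReflPerm (j : ℕ) : Equiv.Perm ℤ := (simpleRefl_involutive hn j).toPerm

lemma coe_simpleReflPerm (j : ℕ) : ⇑(simpleReflPerm hn j) = affRefl n j (j + 1) := rfl

lemma simpleReflPerm_mul_self (j : ℕ) : simpleReflPerm hn j * simpleReflPerm hn j = 1 :=
  Equiv.ext (simpleRefl_involutive hn j)

lemma wordPrefix_simpleReflPerm_add_natCast (m : ℕ) (k : ℤ) :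
    wordPrefix (simpleReflPerm hn) m (k + n) = wordPrefix (simpleReflPerm hn) m k + n := by
  induction m generalizing k with
  | zero => simp [wordPrefix]
  | succ m ih =>
    rw [wordPrefix_succ, Equiv.Perm.mul_apply, Equiv.Perm.mul_apply, coe_simpleReflPerm,
      affRefl_add_natCast, ih]

lemma wordPrefix_simpleReflPerm_apply_self (m : ℕ) :
    wordPrefix (simpleReflPerm hn) m m = 0 := by
  induction m with
  | zero => simp [wordPrefix]
  | succ m ih =>
    rw [wordPrefix_succ, Equiv.Perm.mul_apply, coe_simpleReflPerm, Nat.cast_succ,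
      affRefl_apply_right (by simpa using not_natCast_dvd_of_pos_of_lt one_pos (by omega)), ih]

lemma wordPrefix_simpleReflPerm_apply_add (m : ℕ) {d : ℤ} (hd : 0 < d) (hdn : d < n) :
    wordPrefix (simpleReflPerm hn) m (m + d) = m + d + (m + d - 1) / (n - 1) := by
  have hn1 : (n : ℤ) - 1 ≠ 0 := by omega
  induction m generalizing d with
  | zero =>
    have := Int.ediv_eq_zero_of_lt (by omega : 0 ≤ d - 1) (by omega : d - 1 < n - 1)
    simp [wordPrefix, this]
  | succ m ih =>
    rw [wordPrefix_succ, Equiv.Perm.mul_apply, coe_simpleReflPerm, Nat.cast_succ]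
    -- `s_m` sends `m + n` to `m + 1 + n` and fixes `m + 2, …, m + n - 1`.
    rcases (show d = n - 1 ∨ d < n - 1 by omega) with rfl | hd'
    · rw [show (m : ℤ) + 1 + (n - 1) = m + n * 1 by ring, affRefl_add_mul_left, mul_one,
        wordPrefix_simpleReflPerm_add_natCast, ih one_pos (by omega), add_sub_cancel_right,
        show (m : ℤ) + n - 1 = m + 1 * (n - 1) by ring, Int.add_mul_ediv_right _ _ hn1]
      ring
    · rw [affRefl_of_not_dvd (by simpa [add_assoc] using
          not_natCast_dvd_of_pos_of_lt (by omega : 0 < 1 + d) (by omega))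
          (by simpa using not_natCast_dvd_of_pos_of_lt hd (by omega)),
        show (m : ℤ) + 1 + d = m + (d + 1) by ring, ih (by omega) (by omega)]

lemma coe_wordRefl_simpleReflPerm (m : ℕ) :
    ⇑(wordRefl (simpleReflPerm hn) m) = affRefl n 0 (m + 1 + ((m / (n - 1) : ℕ) : ℤ)) := by
  rw [wordRefl, Equiv.Perm.coe_mul, Equiv.Perm.coe_mul, coe_simpleReflPerm,
    comp_affRefl_of_periodic (wordPrefix_simpleReflPerm_add_natCast hn m)
      (by simpa using not_natCast_dvd_of_pos_of_lt one_pos (by omega)),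
    Function.comp_assoc, ← Equiv.Perm.coe_mul, mul_inv_cancel, Equiv.Perm.coe_one,
    Function.comp_id, wordPrefix_simpleReflPerm_apply_self,
    wordPrefix_simpleReflPerm_apply_add hn m one_pos (by omega)]
  push_cast [Int.natCast_div, Nat.cast_sub (by omega : 1 ≤ n)]
  ring_nf

end AffineReflections

lemma listProd_map_coe (l : List (Equiv.Perm ℤ)) : listProd (l.map (⇑)) = ⇑l.prod := by
  induction l with
  | nil => rfl
  | cons f t ih => rw [List.map_cons, List.prod_cons, Equiv.Perm.coe_mul, ← ih]; rfl

section Subword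

variable {n : ℕ} (hn : 2 ≤ n) (S : Finset ℕ)

lemma letterAt_eq_coe (k : ℕ) :
    letterAt n S k = ⇑(if k ∈ S then 1 else simpleReflPerm hn k) := by
  unfold letterAt
  split_ifs <;> rfl

lemma conjAt_eq_coe_subwordRefl {i : ℕ} (hi : i ≤ n * (n - 1)) :
    conjAt n S i = ⇑(subwordRefl (simpleReflPerm hn) S i) := by
  have hletters : (subword n S).take i =
      ((List.range i).map fun k => if k ∈ S then 1 else simpleReflPerm hn k).map (⇑) := by
    rw [subword, ← List.map_take, List.take_range, min_eq_left hi, List.map_map]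
    exact List.map_congr_left fun k _ => letterAt_eq_coe hn S k
  rw [conjAt, uPref, uPrefInv, hletters, ← List.map_reverse, listProd_map_coe, listProd_map_coe,
    List.prod_reverse_eq_inv_of_mul_self, subwordRefl, Equiv.Perm.coe_mul, Equiv.Perm.coe_mul]
  · rfl
  · simp only [List.mem_map]
    rintro _ ⟨k, -, rfl⟩
    split_ifs
    · exact mul_one 1
    · exact simpleReflPerm_mul_self hn k

lemma skipRefls_eq_map_coe (hS : S ⊆ Finset.range (n * (n - 1))) :
    skipRefls n S = ((skipIdx S).map (subwordRefl (simpleReflPerm hn) S)).map (⇑) := by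
  rw [skipRefls, List.map_map]
  refine List.map_congr_left fun i hi => conjAt_eq_coe_subwordRefl hn S ?_
  exact (Finset.mem_range.mp (hS ((Finset.mem_sort _).mp hi))).le

end Subword

/-- For a subword `u` of `λ̂ₙ` with skip reflections `r^u = [r₁, …, r_s]`
and (1-based) skip indices `i₁ < ⋯ < i_s`, for each `j`:
`(r₁ ⋯ r_{j-1}) r_j (r_{j-1} ⋯ r₁) = (( 0, i_j + ⌊(i_j - 1)/(n-1)⌋ ))`.
(0-based: `i` is the `j`-th 0-based skip index, so `i_j = i + 1` and the right-hand
side is `(( 0, (i+1) + i/(n-1) ))`; `r_j = conjAt n S i`.) -/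
theorem stmt13 (n : ℕ) (hn : 2 ≤ n) (S : Finset ℕ)
    (hS : S ⊆ Finset.range (n * (n - 1))) :
    ∀ j : ℕ, ∀ hj : j < (skipIdx S).length, ∀ i : ℕ,
      (skipIdx S).get ⟨j, hj⟩ = i →
      listProd ((skipRefls n S).take j) ∘ conjAt n S i ∘
          listProd (((skipRefls n S).take j).reverse)
        = affRefl n 0 ((i : ℤ) + 1 + ((i / (n - 1) : ℕ) : ℤ)) := by
  intro j hj i hi
  have hiS : i ∈ S := (Finset.mem_sort _).mp (hi ▸ List.get_mem _ _)
  rw [skipRefls_eq_map_coe hn S hS, ← List.map_take, ← List.map_reverse, listProd_map_coe,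
    listProd_map_coe, conjAt_eq_coe_subwordRefl hn S (Finset.mem_range.mp (hS hiS)).le,
    ← Equiv.Perm.coe_mul, ← Equiv.Perm.coe_mul, ← mul_assoc, ← hi, List.get_eq_getElem]
  exact (congrArg (⇑) (conj_subwordRefl_eq_wordRefl (simpleReflPerm_mul_self hn) hj)).trans
    (coe_wordRefl_simpleReflPerm hn _)
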